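/- For every graph map i : A → B and every n ∈ ℕ, the map i has the homotopy extension property for homotopies of length n if and only if (A×I_n) ⊔_i B is a retract of B × I_n, i.e., there exists a graph map r : B × I_n → (A×I_n) ⊔_i B with r ∘ j equal to the identity of (A×I_n) ⊔_i B. -/

import Mathlib

/-- A graph: vertex type `V` with a symmetric adjacency relation; loops are allowed. -/
structure GraphWithLoops (V : Type) : Type where
  adj : V → V → Prop
  symm : ∀ {x y : V}, adj x y → adj y x

/-- A graph map: a vertex function preserving edges. -/
def IsGraphHom {V W : Type} (G : GraphWithLoops V) (H : GraphWithLoops W) (f : V → W) : Prop :=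
  ∀ ⦃x y : V⦄, G.adj x y → H.adj (f x) (f y)

/-- The categorical product of graphs. -/
def GraphWithLoops.prod {V W : Type} (G : GraphWithLoops V) (H : GraphWithLoops W) : GraphWithLoops (V × W) where
  adj p q := G.adj p.1 q.1 ∧ H.adj p.2 q.2
  symm h := ⟨G.symm h.1, H.symm h.2⟩

/-- The graph `I_n` on vertices `{0,…,n}` with `i ~ j` iff `|i-j| ≤ 1` (all vertices looped). -/
def pathI (n : ℕ) : GraphWithLoops (Fin (n + 1)) where
  adj i j := (i : ℕ) ≤ (j : ℕ) + 1 ∧ (j : ℕ) ≤ (i : ℕ) + 1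
  symm h := ⟨h.2, h.1⟩

/-- `f` and `g` are ×-homotopic. -/
def Homotopic {V W : Type} (G : GraphWithLoops V) (H : GraphWithLoops W) (f g : V → W) : Prop :=
  ∃ (n : ℕ) (F : V × Fin (n + 1) → W),
    IsGraphHom (G.prod (pathI n)) H F ∧ (∀ a, F (a, 0) = f a) ∧ (∀ a, F (a, Fin.last n) = g a)

/-- `f` is a ×-homotopy equivalence. -/
def IsHtpyEquiv {V W : Type} (G : GraphWithLoops V) (H : GraphWithLoops W) (f : V → W) : Prop :=
  IsGraphHom G H f ∧ ∃ g : W → V, IsGraphHom H G g ∧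
    Homotopic G G (g ∘ f) id ∧ Homotopic H H (f ∘ g) id

/-- A graph is connected if any two vertices are joined by a path of edges. -/
def GraphWithLoops.Connected {V : Type} (G : GraphWithLoops V) : Prop :=
  ∀ x y : V, Relation.ReflTransGen G.adj x y

/-- `i : A → B` is an unfold: an induced-subgraph inclusion adding exactly one new vertex `v`
with `N(v) ⊆ N(i v')` for some vertex `v'` of `A`. -/
def IsUnfold {A B : Type} (GA : GraphWithLoops A) (GB : GraphWithLoops B) (i : A → B) : Prop :=
  Function.Injective i ∧ (∀ x y : A, GA.adj x y ↔ GB.adj (i x) (i y)) ∧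
  ∃ v : B, v ∉ Set.range i ∧ (∀ b : B, b ∉ Set.range i → b = v) ∧
    ∃ v' : A, ∀ b : B, GB.adj v b → GB.adj (i v') b

/-- Relation generating the pushout of `i : A → B` along `f : A → C`. -/
def pushoutRel {A B C : Type} (i : A → B) (f : A → C) : B ⊕ C → B ⊕ C → Prop :=
  fun x y => ∃ a : A, x = Sum.inl (i a) ∧ y = Sum.inr (f a)

/-- Vertex set of the pushout. -/
def Pushout {A B C : Type} (i : A → B) (f : A → C) : Type :=
  Quot (pushoutRel i f)

/-- Adjacency on a disjoint union. -/
def sumAdj {B C : Type} (GB : GraphWithLoops B) (GC : GraphWithLoops C) (x y : B ⊕ C) : Prop :=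
  (∃ b b', x = Sum.inl b ∧ y = Sum.inl b' ∧ GB.adj b b') ∨
  (∃ c c', x = Sum.inr c ∧ y = Sum.inr c' ∧ GC.adj c c')

/-- The pushout graph of `i : A → B` along `f : A → C`: classes are adjacent iff some
representatives are adjacent in `B` or in `C`. -/
def pushoutGraph {A B C : Type} (GB : GraphWithLoops B) (GC : GraphWithLoops C) (i : A → B) (f : A → C) :
    GraphWithLoops (Pushout i f) where
  adj x y := ∃ u v : B ⊕ C,
    Quot.mk (pushoutRel i f) u = x ∧ Quot.mk (pushoutRel i f) v = y ∧ sumAdj GB GC u v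
  symm := by
    rintro x y ⟨u, v, hu, hv, h⟩
    refine ⟨v, u, hv, hu, ?_⟩
    rcases h with ⟨b, b', rfl, rfl, hbb⟩ | ⟨c, c', rfl, rfl, hcc⟩
    · exact Or.inl ⟨b', b, rfl, rfl, GB.symm hbb⟩
    · exact Or.inr ⟨c', c, rfl, rfl, GC.symm hcc⟩

/-- The cobase change `C → B ⊔_A C` of `i` along `f`. -/
def cobase {A B C : Type} (i : A → B) (f : A → C) : C → Pushout i f :=
  fun c => Quot.mk (pushoutRel i f) (Sum.inr c)

/-- The map `a ↦ (a,0)` into the cylinder `A × I_n`. -/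
def cyl0 {A : Type} (n : ℕ) : A → A × Fin (n + 1) := fun a => (a, 0)

/-- The canonical map `(A × I_n) ⊔_i B → B × I_n`, induced by `(a,t) ↦ (i a, t)`, `b ↦ (b,0)`. -/
def cylJ {A B : Type} (i : A → B) (n : ℕ) : Pushout (cyl0 (A := A) n) i → B × Fin (n + 1) :=
  Quot.lift (Sum.elim (fun p => (i p.1, p.2)) (fun b => (b, (0 : Fin (n + 1)))))
    (by rintro x y ⟨a, rfl, rfl⟩; rfl)

/-- `i : A → B` has the homotopy extension property for homotopies of length `n`. -/
def HEP {A B : Type} (GA : GraphWithLoops A) (GB : GraphWithLoops B) (i : A → B) (n : ℕ) : Prop :=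
  ∀ (Z : Type) (GZ : GraphWithLoops Z) (f : A → Z) (g : B → Z),
    IsGraphHom GA GZ f → IsGraphHom GB GZ g → (∀ a, g (i a) = f a) →
    ∀ F : A × Fin (n + 1) → Z, IsGraphHom (GA.prod (pathI n)) GZ F → (∀ a, F (a, 0) = f a) →
    ∃ G : B × Fin (n + 1) → Z, IsGraphHom (GB.prod (pathI n)) GZ G ∧
      (∀ b, G (b, 0) = g b) ∧ (∀ a t, G (i a, t) = F (a, t))

/-- `FoldsTo G S`: the graph `G` can be reduced by a finite sequence of folds to the
induced subgraph on the vertex set `S`. -/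
inductive FoldsTo {V : Type} (G : GraphWithLoops V) : Set V → Prop
  | univ : FoldsTo G Set.univ
  | step {S : Set V} {v v' : V} : FoldsTo G S → v ∈ S → v' ∈ S → v ≠ v' →
      (∀ x ∈ S, G.adj v x → G.adj v' x) → FoldsTo G (S \ {v})

/-- `RelFoldsTo G A S`: `G` can be reduced to the induced subgraph on `S` by a finite
sequence of folds relative to `A` (never removing a vertex of `A`). -/
inductive RelFoldsTo {V : Type} (G : GraphWithLoops V) (A : Set V) : Set V → Prop
  | univ : RelFoldsTo G A Set.univ
  | step {S : Set V} {v v' : V} : RelFoldsTo G A S → v ∈ S → v ∉ A → v' ∈ S → v ≠ v' →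
      (∀ x ∈ S, G.adj v x → G.adj v' x) → RelFoldsTo G A (S \ {v})

/-- `p : X → Y` has the right lifting property with respect to every unfold. -/
def RLPunfolds {X Y : Type} (GX : GraphWithLoops X) (GY : GraphWithLoops Y) (p : X → Y) : Prop :=
  ∀ (A B : Type) (GA : GraphWithLoops A) (GB : GraphWithLoops B) (i : A → B), IsUnfold GA GB i →
    ∀ (f : A → X) (g : B → Y), IsGraphHom GA GX f → IsGraphHom GB GY g →
      (∀ a, p (f a) = g (i a)) →
      ∃ h : B → X, IsGraphHom GB GX h ∧ (∀ a, h (i a) = f a) ∧ ∀ b, p (h b) = g b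

/-- The graph `L_n`: the path `0 - 1 - ⋯ - n` with a loop at `0`. -/
def Lgraph (t : ℕ) : GraphWithLoops (Fin (t + 1)) where
  adj x y := ((x : ℕ) + 1 = (y : ℕ) ∨ (y : ℕ) + 1 = (x : ℕ)) ∨ ((x : ℕ) = 0 ∧ (y : ℕ) = 0)
  symm := by tauto

/-- The graph `I_0`: a single looped vertex. -/
def I0 : GraphWithLoops Unit where
  adj _ _ := True
  symm h := h

/-- The constant graph map `p_n : L_n → I_0`. -/
def pL (n : ℕ) : Fin (n + 1) → Unit := fun _ => ()

/-- An object of the category of finite graphs. -/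
structure FinGraph : Type where
  n : ℕ
  G : GraphWithLoops (Fin n)

/-- A class of morphisms in the category of finite graphs. -/
def MorClass : Type :=
  ∀ (A B : FinGraph), (Fin A.n → Fin B.n) → Prop

/-- `f : A → B` is a retract of `g : X → Y` in the arrow category. -/
def IsRetractOf (A B X Y : FinGraph) (f : Fin A.n → Fin B.n) (g : Fin X.n → Fin Y.n) : Prop :=
  ∃ (iA : Fin A.n → Fin X.n) (rA : Fin X.n → Fin A.n)
    (iB : Fin B.n → Fin Y.n) (rB : Fin Y.n → Fin B.n),
    IsGraphHom A.G X.G iA ∧ IsGraphHom X.G A.G rA ∧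
    IsGraphHom B.G Y.G iB ∧ IsGraphHom Y.G B.G rB ∧
    (∀ a, rA (iA a) = a) ∧ (∀ b, rB (iB b) = b) ∧
    (∀ a, g (iA a) = iB (f a)) ∧ (∀ x, f (rA x) = rB (g x))

/-- A class of morphisms is closed under retracts. -/
def RetractClosed (S : MorClass) : Prop :=
  ∀ (A B X Y : FinGraph) (f : Fin A.n → Fin B.n) (g : Fin X.n → Fin Y.n),
    IsGraphHom A.G B.G f → IsGraphHom X.G Y.G g →
    IsRetractOf A B X Y f g → S X Y g → S A B f

/-- `i` has the left lifting property with respect to `p` (in the category of finite graphs). -/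
def HasLift (A B X Y : FinGraph) (i : Fin A.n → Fin B.n) (p : Fin X.n → Fin Y.n) : Prop :=
  ∀ (f : Fin A.n → Fin X.n) (g : Fin B.n → Fin Y.n),
    IsGraphHom A.G X.G f → IsGraphHom B.G Y.G g → (∀ a, p (f a) = g (i a)) →
    ∃ h : Fin B.n → Fin X.n, IsGraphHom B.G X.G h ∧ (∀ a, h (i a) = f a) ∧ ∀ b, p (h b) = g b

/-- A model structure on the category of finite graphs: classes `W`, `Cof`, `Fib` of graph maps,
each closed under retracts, with two-out-of-three for `W`, the lifting axioms, and the two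
factorization axioms. -/
structure ModelStructure (W Cof Fib : MorClass) : Prop where
  w_hom : ∀ A B f, W A B f → IsGraphHom A.G B.G f
  c_hom : ∀ A B f, Cof A B f → IsGraphHom A.G B.G f
  f_hom : ∀ A B f, Fib A B f → IsGraphHom A.G B.G f
  w_retract : RetractClosed W
  c_retract : RetractClosed Cof
  f_retract : RetractClosed Fib
  two_of_three_comp : ∀ (A B D : FinGraph) (f : Fin A.n → Fin B.n) (g : Fin B.n → Fin D.n),
    IsGraphHom A.G B.G f → IsGraphHom B.G D.G g → W A B f → W B D g → W A D (g ∘ f)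
  two_of_three_right : ∀ (A B D : FinGraph) (f : Fin A.n → Fin B.n) (g : Fin B.n → Fin D.n),
    IsGraphHom A.G B.G f → IsGraphHom B.G D.G g → W A B f → W A D (g ∘ f) → W B D g
  two_of_three_left : ∀ (A B D : FinGraph) (f : Fin A.n → Fin B.n) (g : Fin B.n → Fin D.n),
    IsGraphHom A.G B.G f → IsGraphHom B.G D.G g → W B D g → W A D (g ∘ f) → W A B f
  lift_cw_f : ∀ (A B X Y : FinGraph) (i : Fin A.n → Fin B.n) (p : Fin X.n → Fin Y.n),
    Cof A B i → W A B i → Fib X Y p → HasLift A B X Y i p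
  lift_c_fw : ∀ (A B X Y : FinGraph) (i : Fin A.n → Fin B.n) (p : Fin X.n → Fin Y.n),
    Cof A B i → Fib X Y p → W X Y p → HasLift A B X Y i p
  fact_c_fw : ∀ (A B : FinGraph) (f : Fin A.n → Fin B.n), IsGraphHom A.G B.G f →
    ∃ (Z : FinGraph) (c : Fin A.n → Fin Z.n) (p : Fin Z.n → Fin B.n),
      Cof A Z c ∧ Fib Z B p ∧ W Z B p ∧ ∀ a, p (c a) = f a
  fact_cw_f : ∀ (A B : FinGraph) (f : Fin A.n → Fin B.n), IsGraphHom A.G B.G f →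
    ∃ (Z : FinGraph) (c : Fin A.n → Fin Z.n) (p : Fin Z.n → Fin B.n),
      Cof A Z c ∧ W A Z c ∧ Fib Z B p ∧ ∀ a, p (c a) = f a

/-- The class of ×-homotopy equivalences of finite graphs. -/
def Whe : MorClass := fun A B f => IsHtpyEquiv A.G B.G f

/-!
A retraction `r : B × I_n → (A × I_n) ⊔_i B` is exactly what the homotopy extension property
produces when applied to the tautological data in the pushout itself; conversely, any HEP
problem `(f, g, F)` factors through the pushout by its universal property, and composing the
induced map with `r` solves it.
-/

namespace Pushout

variable {A B C : Type} {i : A → B} {f : A → C}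

def inl (i : A → B) (f : A → C) (b : B) : Pushout i f := Quot.mk _ (Sum.inl b)

theorem inl_eq_cobase (a : A) : inl i f (i a) = cobase i f (f a) :=
  Quot.sound ⟨a, rfl, rfl⟩

theorem isGraphHom_inl (GB : GraphWithLoops B) (GC : GraphWithLoops C) :
    IsGraphHom GB (pushoutGraph GB GC i f) (inl i f) :=
  fun _ _ h => ⟨_, _, rfl, rfl, Or.inl ⟨_, _, rfl, rfl, h⟩⟩

theorem isGraphHom_cobase (GB : GraphWithLoops B) (GC : GraphWithLoops C) :
    IsGraphHom GC (pushoutGraph GB GC i f) (cobase i f) :=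
  fun _ _ h => ⟨_, _, rfl, rfl, Or.inr ⟨_, _, rfl, rfl, h⟩⟩

@[elab_as_elim]
theorem induction_on {motive : Pushout i f → Prop} (x : Pushout i f)
    (inl : ∀ b, motive (inl i f b)) (cobase : ∀ c, motive (cobase i f c)) : motive x := by
  induction x using Quot.ind with
  | mk u => cases u with
    | inl b => exact inl b
    | inr c => exact cobase c

def desc {Z : Type} (u : B → Z) (v : C → Z) (huv : ∀ a, u (i a) = v (f a)) :
    Pushout i f → Z :=
  Quot.lift (Sum.elim u v) (by rintro _ _ ⟨a, rfl, rfl⟩; exact huv a)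

section desc

variable {Z : Type} {u : B → Z} {v : C → Z} (huv : ∀ a, u (i a) = v (f a))

@[simp]
theorem desc_inl (b : B) : desc u v huv (inl i f b) = u b := rfl

@[simp]
theorem desc_cobase (c : C) : desc u v huv (cobase i f c) = v c := rfl

theorem isGraphHom_desc {GB : GraphWithLoops B} {GC : GraphWithLoops C} {GZ : GraphWithLoops Z}
    (hu : IsGraphHom GB GZ u) (hv : IsGraphHom GC GZ v) :
    IsGraphHom (pushoutGraph GB GC i f) GZ (desc u v huv) := by
  rintro _ _ ⟨_, _, rfl, rfl, ⟨b, b', rfl, rfl, h⟩ | ⟨c, c', rfl, rfl, h⟩⟩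
  · exact hu h
  · exact hv h

end desc

end Pushout

open Pushout

section Cylinder

variable {A B : Type} {i : A → B} {n : ℕ}

theorem retraction_cylJ_iff (r : B × Fin (n + 1) → Pushout (cyl0 (A := A) n) i) :
    (∀ x, r (cylJ i n x) = x) ↔
      (∀ b, r (b, 0) = cobase (cyl0 n) i b) ∧ ∀ a t, r (i a, t) = inl (cyl0 n) i (a, t) := by
  refine ⟨fun h => ⟨fun b => h (cobase _ _ b), fun a t => h (inl _ _ (a, t))⟩, ?_⟩
  rintro ⟨hbase, hcyl⟩ x
  induction x using Pushout.induction_on with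
  | inl p => exact hcyl p.1 p.2
  | cobase b => exact hbase b

end Cylinder

theorem stmt0_general {A B : Type} (GA : GraphWithLoops A) (GB : GraphWithLoops B) (i : A → B)
    (n : ℕ) :
    HEP GA GB i n ↔
      ∃ r : B × Fin (n + 1) → Pushout (cyl0 (A := A) n) i,
        IsGraphHom (GB.prod (pathI n)) (pushoutGraph (GA.prod (pathI n)) GB (cyl0 n) i) r ∧
          ∀ x, r (cylJ i n x) = x := by
  set GP := pushoutGraph (GA.prod (pathI n)) GB (cyl0 n) i
  simp only [retraction_cylJ_iff]
  constructor
  · intro hep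
    have hbottom : IsGraphHom GA GP (inl (cyl0 n) i ∘ cyl0 n) :=
      fun a a' h => isGraphHom_inl _ _ ⟨h, by simp [pathI, cyl0]⟩
    obtain ⟨r, hr, hr0, hri⟩ := hep _ GP _ _ hbottom (isGraphHom_cobase _ _)
      (fun a => (inl_eq_cobase a).symm) _ (isGraphHom_inl _ _) (fun _ => rfl)
    exact ⟨r, hr, hr0, hri⟩
  · rintro ⟨r, hr, hr0, hri⟩ Z GZ f g - hg hgf F hF hF0
    have hsq : ∀ a, F (cyl0 n a) = g (i a) := fun a => (hF0 a).trans (hgf a).symm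
    refine ⟨desc F g hsq ∘ r, fun _ _ h => isGraphHom_desc hsq hF hg (hr h), fun b => ?_,
      fun a t => ?_⟩
    · simp [hr0]
    · simp [hri]

/-- a graph map `i : A → B` has the homotopy extension property for homotopies
of length `n` iff `(A × I_n) ⊔_i B` is a retract of `B × I_n`. -/
theorem stmt0 {A B : Type} (GA : GraphWithLoops A) (GB : GraphWithLoops B) (i : A → B)
    (hi : IsGraphHom GA GB i) (n : ℕ) :
    HEP GA GB i n ↔
      ∃ r : B × Fin (n + 1) → Pushout (cyl0 (A := A) n) i,
        IsGraphHom (GB.prod (pathI n)) (pushoutGraph (GA.prod (pathI n)) GB (cyl0 n) i) r ∧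
          ∀ x, r (cylJ i n x) = x :=
  stmt0_general GA GB i n
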